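/- arXiv:2104.06228 — 4 statements merged into one kernel-verified Lean document; each statement's English description precedes it below -/
import Mathlib

section
/- Let p be a prime with p ≡ 3 (mod 4), let A = diag(1, 1, p), and let SO(3)_p = {L ∈ M₃(ℚ_p) : LᵀAL = A, det L = 1}. Let e₁, e₂, e₃ be the standard basis vectors of ℚ_p³. Then there exists M ∈ SO(3)_p which admits no Cardano decomposition of the form x–z–y: there do not exist X, Z, Y ∈ SO(3)_p with X e₁ = e₁, Z e₃ = e₃, Y e₂ = e₂ and M = X·Z·Y. -/
/-!
Rotations around the first axis fix the first row and rotations around the second axis fix the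
second row, so outside its middle entry the first row of `X * Z * Y` is `Z 0 0 • Y 0`. For
`M = cardanoWitness p`, `M 0 0 = 0` and `M 0 2 ≠ 0` then force `Z 0 0 ≠ 0` and `Y 0 0 = 0`, so the
first column of `Y` is `(0, 0, w)` with `p * w ^ 2 = 1`, impossible since `p * w ^ 2` has odd
valuation.
-/

open Matrix

theorem Padic.natCast_mul_sq_ne_one (p : ℕ) [Fact p.Prime] (w : ℚ_[p]) :
    (p : ℚ_[p]) * w ^ 2 ≠ 1 := by
  intro h
  have hw : w ≠ 0 := by
    rintro rfl
    simp at h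
  have hval := congrArg Padic.valuation h
  rw [Padic.valuation_mul (by exact_mod_cast (Fact.out : p.Prime).ne_zero) (pow_ne_zero 2 hw),
    Padic.valuation_p, sq, Padic.valuation_mul hw hw, Padic.valuation_one] at hval
  omega

namespace Matrix

variable {n R : Type*} [Fintype n] [DecidableEq n] [CommRing R]

theorem transpose_mul_diagonal_mul_apply (L : Matrix n n R) (d : n → R) (i j : n) :
    (Lᵀ * diagonal d * L) i j = ∑ k, d k * L k i * L k j := by
  rw [mul_apply]
  exact Finset.sum_congr rfl fun k _ => by rw [mul_diagonal, transpose_apply]; ring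

theorem row_eq_single_of_mulVec_single [IsDomain R] {L : Matrix n n R} {d : n → R}
    (hL : Lᵀ * diagonal d * L = diagonal d) {i : n} (hi : d i ≠ 0)
    (hfix : L *ᵥ Pi.single i 1 = Pi.single i 1) : L i = Pi.single i 1 := by
  have hLi : ∀ k, L k i = (Pi.single i 1 : n → R) k := fun k => by
    rw [← hfix, mulVec_single_one, col_apply]
  funext j
  have h := congrFun (congrFun hL i) j
  rw [transpose_mul_diagonal_mul_apply, Finset.sum_eq_single i
    (fun k _ hk => by rw [hLi, Pi.single_eq_of_ne hk, mul_zero, zero_mul]) (by simp),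
    hLi, Pi.single_eq_same, mul_one, diagonal_apply] at h
  refine mul_left_cancel₀ hi ?_
  rw [h, Pi.single_apply, mul_ite, mul_one, mul_zero]
  simp only [eq_comm]

end Matrix

/-- It sends `e₁` to `e₂`, and its last two columns come from the point
`((p - 1) / (p + 1), 2 / (p + 1))` of the conic `x² + p z² = 1`. -/
noncomputable def cardanoWitness (p : ℕ) [Fact p.Prime] : Matrix (Fin 3) (Fin 3) ℚ_[p] :=
  let c : ℚ_[p] := p + 1
  !![0, (p - 1) / c, 2 * p / c;
     1, 0, 0;
     0, 2 / c, (1 - p) / c]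

theorem cardanoWitness_mem (p : ℕ) [Fact p.Prime] :
    cardanoWitness p ∈ {L : Matrix (Fin 3) (Fin 3) ℚ_[p] |
      Lᵀ * diagonal ![1, 1, (p : ℚ_[p])] * L = diagonal ![1, 1, (p : ℚ_[p])] ∧ L.det = 1} := by
  have hc : (p : ℚ_[p]) + 1 ≠ 0 := by exact_mod_cast p.succ_ne_zero
  constructor
  · ext i j
    fin_cases i <;> fin_cases j <;>
      simp [cardanoWitness, transpose_mul_diagonal_mul_apply, Fin.sum_univ_three] <;>
      field_simp <;> ring
  · rw [det_fin_three]
    simp only [cardanoWitness, of_apply, cons_val', cons_val_zero, cons_val_fin_one, cons_val_one,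
      cons_val, mul_zero, zero_mul, sub_self, mul_one, zero_sub, add_zero, sub_zero]
    field_simp
    ring

theorem cardanoWitness_zero_zero (p : ℕ) [Fact p.Prime] : cardanoWitness p 0 0 = 0 := rfl

theorem cardanoWitness_zero_two_ne_zero (p : ℕ) [Fact p.Prime] : cardanoWitness p 0 2 ≠ 0 := by
  have hp : (p : ℚ_[p]) ≠ 0 := by exact_mod_cast (Fact.out : p.Prime).ne_zero
  have hc : (p : ℚ_[p]) + 1 ≠ 0 := by exact_mod_cast p.succ_ne_zero
  simp [cardanoWitness, hp, hc]

theorem mul_mul_apply_zero_of_rows {R : Type*} [CommRing R] {X Z Y : Matrix (Fin 3) (Fin 3) R}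
    (hX : X 0 = Pi.single 0 1) (hZ : Z 0 2 = 0) (hY : Y 1 = Pi.single 1 1) {j : Fin 3}
    (hj : j ≠ 1) : (X * Z * Y) 0 j = Z 0 0 * Y 0 j := by
  have hY1j : Y 1 j = 0 := by simp [hY, Ne.symm hj]
  have hX0 := congrFun hX
  simp [mul_apply, Fin.sum_univ_three, hX0, hZ, hY1j]

theorem no_xzy_cardano_three_mod_four_general
    (p : ℕ) [Fact p.Prime]
    (A : Matrix (Fin 3) (Fin 3) ℚ_[p])
    (hA : A = Matrix.diagonal ![1, 1, (p : ℚ_[p])])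
    (SO3 : Set (Matrix (Fin 3) (Fin 3) ℚ_[p]))
    (hSO3 : SO3 = {L | Lᵀ * A * L = A ∧ L.det = 1})
    (e : Fin 3 → (Fin 3 → ℚ_[p])) (he : ∀ i, e i = Pi.single i 1) :
    ∃ M ∈ SO3, ¬ ∃ X Z Y, X ∈ SO3 ∧ Z ∈ SO3 ∧ Y ∈ SO3 ∧
      X.mulVec (e 0) = e 0 ∧ Z.mulVec (e 2) = e 2 ∧ Y.mulVec (e 1) = e 1 ∧
      M = X * Z * Y := by
  obtain rfl : e = fun i => Pi.single i 1 := funext he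
  subst hA hSO3
  refine ⟨cardanoWitness p, cardanoWitness_mem p, ?_⟩
  rintro ⟨X, Z, Y, ⟨hX, -⟩, -, ⟨hY, -⟩, hXe, hZe, hYe, hM⟩
  have hX0 := row_eq_single_of_mulVec_single hX one_ne_zero hXe
  have hY1 := row_eq_single_of_mulVec_single hY one_ne_zero hYe
  have hZ02 : Z 0 2 = 0 := by simpa [mulVec_single_one] using congrFun hZe 0
  have hM0 : ∀ j ≠ 1, cardanoWitness p 0 j = Z 0 0 * Y 0 j := fun j hj => by
    rw [hM, mul_mul_apply_zero_of_rows hX0 hZ02 hY1 hj]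
  have hZ00 : Z 0 0 ≠ 0 :=
    left_ne_zero_of_mul (hM0 2 (by decide) ▸ cardanoWitness_zero_two_ne_zero p)
  have hY00 : Y 0 0 = 0 :=
    (mul_eq_zero.mp (hM0 0 (by decide) ▸ cardanoWitness_zero_zero p)).resolve_left hZ00
  have hnorm : (p : ℚ_[p]) * Y 2 0 ^ 2 = 1 := by
    have h := congrFun (congrFun hY 0) 0
    simp only [transpose_mul_diagonal_mul_apply, Fin.sum_univ_three, hY00, congrFun hY1 0,
      Pi.single_eq_of_ne zero_ne_one, cons_val_zero, cons_val_one, cons_val, mul_zero, zero_add,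
      add_zero, diagonal_apply_eq] at h
    linear_combination h
  exact Padic.natCast_mul_sq_ne_one p (Y 2 0) hnorm

/-- For `p ≡ 3 (mod 4)` and `A = diag(1, 1, p)`, there is an
`M ∈ SO(3)_p` that admits no Cardano decomposition of the form x–z–y. -/
theorem no_xzy_cardano_three_mod_four
    (p : ℕ) [Fact p.Prime] (hp : p % 4 = 3)
    (A : Matrix (Fin 3) (Fin 3) ℚ_[p])
    (hA : A = Matrix.diagonal ![1, 1, (p : ℚ_[p])])
    (SO3 : Set (Matrix (Fin 3) (Fin 3) ℚ_[p]))
    (hSO3 : SO3 = {L | Lᵀ * A * L = A ∧ L.det = 1})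
    (e : Fin 3 → (Fin 3 → ℚ_[p])) (he : ∀ i, e i = Pi.single i 1) :
    ∃ M ∈ SO3, ¬ ∃ X Z Y, X ∈ SO3 ∧ Z ∈ SO3 ∧ Y ∈ SO3 ∧
      X.mulVec (e 0) = e 0 ∧ Z.mulVec (e 2) = e 2 ∧ Y.mulVec (e 1) = e 1 ∧
      M = X * Z * Y :=
  no_xzy_cardano_three_mod_four_general p A hA SO3 hSO3 e he
end

section
/- Let p be an odd prime, v ∈ ℚ_p a p-adic unit that is not a square in ℚ_p, A = diag(1, -v, p), and SO(3)_p = {L ∈ M₃(ℚ_p) : LᵀAL = A, det L = 1}. Let e₁, e₂, e₃ be the standard basis vectors of ℚ_p³. Then there exists M ∈ SO(3)_p which admits no Euler decomposition of the form x–y–x: there do not exist X, Y, X' ∈ SO(3)_p with X e₁ = e₁, Y e₂ = e₂, X' e₁ = e₁ and M = X·Y·X'. -/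
/-!
Take for `M` the rotation about `e₃` given by multiplication by `a + c√v` on `ℚ_p(√v)`, where
`(a, c) = ((1 + v)/(1 - v), 2/(1 - v))` is a point of `a² - v c² = 1` with `c ≠ 0`. A rotation
about `e₁` fixes `e₁` and, being an isometry of a diagonal form, also has first row `e₁ᵀ`; so
`M = X Y X'` forces `a = Y₀₀`. As `Y` fixes `e₂`, the first column of `Y` has `Q₊`-length one,
i.e. `Y₀₀² + p Y₂₀² = 1`. Hence `v c² = a² - 1 = -p Y₂₀²`, which is impossible: as `v` is a
unit, the left side has even valuation and the right side odd.
-/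

open Matrix

section Isometry

variable {n K : Type*} [Fintype n] [DecidableEq n] [Field K] {d : n → K}

theorem single_vecMul_eq_of_isometry {X : Matrix n n K}
    (hX : Xᵀ * diagonal d * X = diagonal d) {i : n} (hd : d i ≠ 0)
    (hXi : X *ᵥ Pi.single i 1 = Pi.single i 1) :
    Pi.single i 1 ᵥ* X = Pi.single i 1 := by
  have h := congrArg (· *ᵥ Pi.single i 1) hX
  have hsmul : Pi.single i (d i) = d i • (Pi.single i 1 : n → K) := by
    rw [← Pi.single_smul, smul_eq_mul, mul_one]
  simp only [← mulVec_mulVec, hXi, diagonal_mulVec_single, mul_one, hsmul, mulVec_smul] at h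
  rw [← mulVec_transpose]
  exact smul_right_injective _ hd h

theorem sum_mul_sq_of_isometry {X : Matrix n n K} (hX : Xᵀ * diagonal d * X = diagonal d)
    (j : n) : ∑ k, d k * X k j ^ 2 = d j := by
  have h := congrFun (congrFun hX j) j
  simp only [mul_apply, transpose_apply, diagonal_apply, mul_ite, mul_zero, Finset.sum_ite_eq',
    Finset.mem_univ, if_true] at h
  rw [← h]
  exact Finset.sum_congr rfl fun k _ => by ring

end Isometry

theorem mul_mul_apply_eq_of_single {m R : Type*} [Fintype m] [DecidableEq m] [CommRing R]
    {X Y X' : Matrix m m R} {i j : m} (hX : Pi.single i 1 ᵥ* X = Pi.single i 1)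
    (hX' : X' *ᵥ Pi.single j 1 = Pi.single j 1) : (X * Y * X') i j = Y i j := by
  have entry : ∀ M : Matrix m m R, M i j = Pi.single i 1 ⬝ᵥ (M *ᵥ Pi.single j 1) := by
    simp
  rw [entry (X * Y * X'), entry Y, ← mulVec_mulVec, hX', ← mulVec_mulVec, dotProduct_mulVec, hX]

theorem Padic.norm_sq_ne_norm_p_mul_sq {p : ℕ} [Fact p.Prime] {x : ℚ_[p]} (hx : x ≠ 0)
    (y : ℚ_[p]) : ‖x ^ 2‖ ≠ ‖(p : ℚ_[p]) * y ^ 2‖ := by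
  rcases eq_or_ne y 0 with rfl | hy
  · simpa using hx
  have hp0 : (p : ℚ_[p]) ≠ 0 := by exact_mod_cast (Fact.out : p.Prime).ne_zero
  have hp1 : (1 : ℝ) < p := by exact_mod_cast (Fact.out : p.Prime).one_lt
  rw [norm_eq_zpow_neg_valuation (pow_ne_zero 2 hx),
    norm_eq_zpow_neg_valuation (mul_ne_zero hp0 (pow_ne_zero 2 hy)),
    valuation_mul hp0 (pow_ne_zero 2 hy), valuation_p, valuation_pow, valuation_pow, Ne,
    zpow_right_inj₀ (by positivity) hp1.ne']
  omega

/-- Multiplication by `a + c√v` in the basis `1, √v`, extended by `e₂ ↦ e₂`. -/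
def planeRotation {R : Type*} [CommRing R] (v a c : R) : Matrix (Fin 3) (Fin 3) R :=
  !![a, v * c, 0; c, a, 0; 0, 0, 1]

section PlaneRotation

variable {R : Type*} [CommRing R] {v a c : R}

theorem planeRotation_isometry (hac : a ^ 2 - v * c ^ 2 = 1) (w : R) :
    (planeRotation v a c)ᵀ * diagonal ![1, -v, w] * planeRotation v a c =
      diagonal ![1, -v, w] := by
  ext i j
  fin_cases i <;> fin_cases j <;>
    simp only [planeRotation, mul_apply, transpose_apply, of_apply, Fin.sum_univ_three, cons_val,
      Fin.reduceFinMk, diagonal_apply_eq, diagonal_apply_ne, ne_eq, Fin.reduceEq,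
      not_false_eq_true] <;>
    first | ring1 | linear_combination hac | linear_combination (-v) * hac

theorem det_planeRotation (hac : a ^ 2 - v * c ^ 2 = 1) : (planeRotation v a c).det = 1 := by
  rw [planeRotation, det_fin_three]
  simp only [of_apply, cons_val', cons_val_zero, cons_val_one, cons_val, cons_val_fin_one]
  linear_combination hac

end PlaneRotation

theorem no_xyx_euler_odd_general
    (p : ℕ) [Fact p.Prime]
    (v : ℚ_[p]) (hv : ‖v‖ = 1) (hvsq : ¬ IsSquare v)
    (A : Matrix (Fin 3) (Fin 3) ℚ_[p])
    (hA : A = Matrix.diagonal ![1, -v, (p : ℚ_[p])])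
    (SO3 : Set (Matrix (Fin 3) (Fin 3) ℚ_[p]))
    (hSO3 : SO3 = {L | Lᵀ * A * L = A ∧ L.det = 1})
    (e : Fin 3 → (Fin 3 → ℚ_[p])) (he : ∀ i, e i = Pi.single i 1) :
    ∃ M ∈ SO3, ¬ ∃ X Y X', X ∈ SO3 ∧ Y ∈ SO3 ∧ X' ∈ SO3 ∧
      X.mulVec (e 0) = e 0 ∧ Y.mulVec (e 1) = e 1 ∧ X'.mulVec (e 0) = e 0 ∧
      M = X * Y * X' := by
  subst hA hSO3
  simp only [he]
  have hv1 : 1 - v ≠ 0 := sub_ne_zero.mpr fun h => hvsq (h ▸ IsSquare.one)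
  set a : ℚ_[p] := (1 + v) / (1 - v)
  set c : ℚ_[p] := 2 / (1 - v)
  have hac : a ^ 2 - v * c ^ 2 = 1 := by simp only [a, c]; field_simp; ring
  refine ⟨planeRotation v a c, ⟨planeRotation_isometry hac _, det_planeRotation hac⟩, ?_⟩
  rintro ⟨X, Y, X', ⟨hX, -⟩, ⟨hY, -⟩, -, hXe, hYe, hX'e, hM⟩
  have hY00 : a = Y 0 0 := by
    have := congrFun (congrFun hM 0) 0
    rwa [mul_mul_apply_eq_of_single (single_vecMul_eq_of_isometry hX one_ne_zero hXe) hX'e]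
      at this
  have hY10 : Y 1 0 = 0 := by
    have hv0 : -v ≠ 0 := neg_ne_zero.mpr (norm_ne_zero_iff.mp (hv ▸ one_ne_zero))
    simpa using congrFun (single_vecMul_eq_of_isometry (i := 1) hY hv0 hYe) 0
  have hcol := sum_mul_sq_of_isometry hY 0
  simp only [Fin.sum_univ_three, cons_val_zero, cons_val_one, cons_val, hY10, ← hY00] at hcol
  have hvc : v * c ^ 2 = -((p : ℚ_[p]) * Y 2 0 ^ 2) := by linear_combination hcol - hac
  refine Padic.norm_sq_ne_norm_p_mul_sq (x := c) (by simp [c, hv1]) (Y 2 0) ?_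
  rw [← one_mul ‖c ^ 2‖, ← hv, ← norm_mul, hvc, norm_neg]

/-- For any odd prime `p`, there is an `M ∈ SO(3)_p` that admits
no Euler decomposition of the form x–y–x. -/
theorem no_xyx_euler_odd
    (p : ℕ) [Fact p.Prime] (hp : p ≠ 2)
    (v : ℚ_[p]) (hv : ‖v‖ = 1) (hvsq : ¬ IsSquare v)
    (A : Matrix (Fin 3) (Fin 3) ℚ_[p])
    (hA : A = Matrix.diagonal ![1, -v, (p : ℚ_[p])])
    (SO3 : Set (Matrix (Fin 3) (Fin 3) ℚ_[p]))
    (hSO3 : SO3 = {L | Lᵀ * A * L = A ∧ L.det = 1})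
    (e : Fin 3 → (Fin 3 → ℚ_[p])) (he : ∀ i, e i = Pi.single i 1) :
    ∃ M ∈ SO3, ¬ ∃ X Y X', X ∈ SO3 ∧ Y ∈ SO3 ∧ X' ∈ SO3 ∧
      X.mulVec (e 0) = e 0 ∧ Y.mulVec (e 1) = e 1 ∧ X'.mulVec (e 0) = e 0 ∧
      M = X * Y * X' :=
  no_xyx_euler_odd_general p v hv hvsq A hA SO3 hSO3 e he
end

section
/- Let SO(3)_2 = {L ∈ M₃(ℚ_2) : LᵀL = I and det L = 1}, and let e₁, e₂, e₃ be the standard basis vectors of ℚ_2³. Then there exists M ∈ SO(3)_2 admitting none of the twelve Cardano or Euler decompositions: for all indices i, j, k ∈ {1, 2, 3} with i ≠ j and j ≠ k, there do not exist X, Y, Z ∈ SO(3)_2 with X e_i = e_i, Y e_j = e_j, Z e_k = e_k and M = X·Y·Z. -/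
/-!
Call a matrix over `ℚ_[2]` near-monomial if each of its rows has one entry of norm `1` and all
other entries of norm at most `1/4`. The square of a `2`-adic unit is `1` modulo `8`, so if
`a² + b² = 1` then one of `a`, `b` is a unit and the other is divisible by `4`; applied to the rows
of an orthogonal matrix fixing a coordinate axis, this shows that every rotation around a
coordinate axis is near-monomial. By the ultrametric inequality near-monomial matrices are closed
under multiplication, whereas the rotation `(1/3)·[[1,2,2],[2,1,-2],[-2,2,-1]]` has the entry `2/3`
of norm `1/2`. So it is not a product of three axis rotations, for any choice of the three axes.
-/

open Matrix

section NearMonomial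

variable {K ι : Type*} [NormedField K] {r : ℝ}

def IsNearBasisVector (r : ℝ) (v : ι → K) : Prop :=
  ∃ c, ‖v c‖ = 1 ∧ ∀ b ≠ c, ‖v b‖ ≤ r

def IsNearMonomial (r : ℝ) (L : Matrix ι ι K) : Prop :=
  ∀ a, IsNearBasisVector r (L a)

theorem isNearBasisVector_single [DecidableEq ι] (hr : 0 ≤ r) (i : ι) :
    IsNearBasisVector r (Pi.single i (1 : K)) :=
  ⟨i, by simp, fun b hb => by simpa [Pi.single_apply, hb] using hr⟩

namespace IsNearBasisVector

variable {v : ι → K}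

theorem norm_eq_one_or_le (hv : IsNearBasisVector r v) (b : ι) : ‖v b‖ = 1 ∨ ‖v b‖ ≤ r := by
  obtain ⟨c, hc, hsmall⟩ := hv
  by_cases hb : b = c
  · exact .inl (hb ▸ hc)
  · exact .inr (hsmall b hb)

theorem norm_le_one (hv : IsNearBasisVector r v) (hr : r ≤ 1) (b : ι) : ‖v b‖ ≤ 1 :=
  (hv.norm_eq_one_or_le b).elim le_of_eq fun h => h.trans hr

theorem vecMul [IsUltrametricDist K] [Fintype ι] [DecidableEq ι] (hv : IsNearBasisVector r v)
    {L : Matrix ι ι K} (hL : IsNearMonomial r L) (hr₀ : 0 ≤ r) (hr₁ : r < 1) :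
    IsNearBasisVector r (v ᵥ* L) := by
  obtain ⟨c, hc, hvsmall⟩ := hv
  obtain ⟨d, hd, hLsmall⟩ := hL c
  have hsplit : ∀ b, (v ᵥ* L) b = v c * L c b + ∑ a ∈ Finset.univ.erase c, v a * L a b :=
    fun b => (Finset.add_sum_erase _ _ (Finset.mem_univ c)).symm
  have hrest : ∀ b, ‖∑ a ∈ Finset.univ.erase c, v a * L a b‖ ≤ r := fun b =>
    IsUltrametricDist.norm_sum_le_of_forall_le_of_nonneg hr₀ fun a ha => by
      rw [norm_mul]
      exact (mul_le_mul (hvsmall a (Finset.ne_of_mem_erase ha))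
        ((hL a).norm_le_one hr₁.le b) (norm_nonneg _) hr₀).trans_eq (mul_one r)
  refine ⟨d, ?_, fun b hb => ?_⟩
  · have hlead : ‖v c * L c d‖ = 1 := by rw [norm_mul, hc, hd, one_mul]
    rw [hsplit, IsUltrametricDist.norm_add_eq_max_of_norm_ne_norm, hlead]
    · exact max_eq_left ((hrest d).trans hr₁.le)
    · exact hlead ▸ ((hrest d).trans_lt hr₁).ne'
  · rw [hsplit]
    refine (IsUltrametricDist.norm_add_le_max _ _).trans (max_le ?_ (hrest b))
    rw [norm_mul, hc, one_mul]
    exact hLsmall b hb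

end IsNearBasisVector

theorem IsNearMonomial.mul [IsUltrametricDist K] [Fintype ι] [DecidableEq ι] {X Y : Matrix ι ι K}
    (hX : IsNearMonomial r X) (hY : IsNearMonomial r Y) (hr₀ : 0 ≤ r) (hr₁ : r < 1) :
    IsNearMonomial r (X * Y) :=
  fun a => (hX a).vecMul hY hr₀ hr₁

end NearMonomial

namespace Padic

theorem norm_two_eq : ‖(2 : ℚ_[2])‖ = 1 / 2 := by simpa using norm_p (p := 2)

theorem norm_sq_sub_one_le_of_norm_eq_one {t : ℚ_[2]} (ht : ‖t‖ = 1) :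
    ‖t ^ 2 - 1‖ ≤ 1 / 8 := by
  set z : ℤ_[2] := ⟨t, ht.le⟩
  have hunit : IsUnit (PadicInt.toZModPow 3 z) :=
    (PadicInt.isUnit_iff.mpr ht).map _
  have hker : PadicInt.toZModPow 3 (z ^ 2 - 1) = 0 := by
    have hsq : ∀ u : (ZMod (2 ^ 3))ˣ, u ^ 2 = 1 := by decide
    rw [map_sub, map_pow, map_one, ← hunit.unit_spec, ← Units.val_pow_eq_pow_val, hsq,
      Units.val_one, sub_self]
  have hmem : z ^ 2 - 1 ∈ Ideal.span {((2 : ℕ) : ℤ_[2]) ^ 3} := by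
    rw [← PadicInt.ker_toZModPow, RingHom.mem_ker]; exact hker
  have := (PadicInt.norm_le_pow_iff_mem_span_pow _ 3).mpr hmem
  norm_num at this
  exact this

theorem norm_one_add_sq_of_norm_eq_one {t : ℚ_[2]} (ht : ‖t‖ = 1) : ‖1 + t ^ 2‖ = 1 / 2 := by
  have hsmall := norm_sq_sub_one_le_of_norm_eq_one ht
  rw [show 1 + t ^ 2 = 2 + (t ^ 2 - 1) by ring,
    IsUltrametricDist.norm_add_eq_max_of_norm_ne_norm, norm_two_eq]
  · exact max_eq_left (by linarith)
  · rw [norm_two_eq]; linarith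

theorem norm_le_quarter_of_sq_le {x : ℚ_[2]} (hx : ‖x‖ ^ 2 ≤ 1 / 8) : ‖x‖ ≤ 1 / 4 := by
  -- the norms on `ℚ_[2]` are the integral powers of `2`, so `‖x‖ > 1/4` forces `‖x‖ ≥ 1/2`
  have := norm_le_pow_iff_norm_lt_pow_add_one x (-2)
  norm_num at this
  rw [this]
  nlinarith [norm_nonneg x]

theorem norm_sq_ne_two (x : ℚ_[2]) : ‖x‖ ^ 2 ≠ 2 := by
  intro hx
  have := norm_le_pow_iff_norm_lt_pow_add_one x 0
  norm_num at this
  rcases le_or_gt ‖x‖ 1 with h | h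
  · nlinarith [norm_nonneg x]
  · have h2 : 2 ≤ ‖x‖ := not_lt.mp fun h2 => h.not_ge (this.mpr h2)
    nlinarith

theorem norm_eq_one_and_le_of_sq_add_sq_eq_one {a b : ℚ_[2]} (h : a ^ 2 + b ^ 2 = 1) :
    (‖a‖ = 1 ∧ ‖b‖ ≤ 1 / 4) ∨ (‖b‖ = 1 ∧ ‖a‖ ≤ 1 / 4) := by
  wlog hba : ‖b‖ ≤ ‖a‖ generalizing a b
  · exact (this (by linear_combination h) (le_of_not_ge hba)).symm
  rcases hba.lt_or_eq with hlt | heq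
  · have hsq : ‖b‖ ^ 2 < ‖a‖ ^ 2 := pow_lt_pow_left₀ hlt (norm_nonneg b) two_ne_zero
    have ha : ‖a‖ = 1 := by
      have := congrArg norm h
      rw [add_comm, IsUltrametricDist.norm_add_eq_max_of_norm_ne_norm (by simpa using hsq.ne),
        norm_pow, norm_pow, max_eq_right hsq.le, norm_one] at this
      exact (pow_eq_one_iff_of_nonneg (norm_nonneg a) two_ne_zero).mp this
    refine .inl ⟨ha, norm_le_quarter_of_sq_le ?_⟩
    rw [← norm_pow, show b ^ 2 = -(a ^ 2 - 1) by linear_combination h, norm_neg]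
    exact norm_sq_sub_one_le_of_norm_eq_one ha
  · exfalso
    have ha0 : a ≠ 0 := by
      rintro rfl
      simp only [norm_zero, norm_eq_zero] at heq
      simp [heq] at h
    have ht : ‖b / a‖ = 1 := by rw [norm_div, heq, div_self (norm_ne_zero_iff.mpr ha0)]
    have hfac : a ^ 2 * (1 + (b / a) ^ 2) = 1 := by field_simp; linear_combination h
    apply norm_sq_ne_two a
    have := congrArg norm hfac
    rw [norm_mul, norm_pow, norm_one_add_sq_of_norm_eq_one ht, norm_one] at this
    linarith

theorem isNearBasisVector_of_sum_sq_eq_one {v : Fin 3 → ℚ_[2]} {i : Fin 3}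
    (hv : ∑ c, v c ^ 2 = 1) (hi : v i = 0) : IsNearBasisVector (1 / 4) v := by
  have hpair : ∀ j k, (∀ c, c = i ∨ c = j ∨ c = k) → v j ^ 2 + v k ^ 2 = 1 →
      IsNearBasisVector (1 / 4) v := by
    intro j k hcover hjk
    rcases norm_eq_one_and_le_of_sq_add_sq_eq_one hjk with ⟨hj, hk⟩ | ⟨hk, hj⟩
    · refine ⟨j, hj, fun b hb => ?_⟩
      rcases hcover b with rfl | rfl | rfl <;> simp_all
    · refine ⟨k, hk, fun b hb => ?_⟩
      rcases hcover b with rfl | rfl | rfl <;> simp_all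
  rw [Fin.sum_univ_three] at hv
  fin_cases i
  · exact hpair 1 2 (by decide) (by simp_all)
  · exact hpair 0 2 (by decide) (by simp_all)
  · exact hpair 0 1 (by decide) (by simp_all)

end Padic

theorem isNearMonomial_of_transpose_mul_self_of_mulVec_single {L : Matrix (Fin 3) (Fin 3) ℚ_[2]}
    {i : Fin 3} (hL : Lᵀ * L = 1) (hfix : L *ᵥ Pi.single i 1 = Pi.single i 1) :
    IsNearMonomial (1 / 4) L := by
  intro a
  by_cases hai : a = i
  · subst hai
    have hrow : L a = Pi.single a 1 := by
      calc L a = Lᵀ *ᵥ Pi.single a 1 := by rw [mulVec_single_one]; rfl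
        _ = Pi.single a 1 := by rw [← hfix, mulVec_mulVec, hL, one_mulVec, hfix]
    exact hrow ▸ isNearBasisVector_single (by norm_num) a
  · refine Padic.isNearBasisVector_of_sum_sq_eq_one (i := i) ?_ ?_
    · have hLLt : L * Lᵀ = 1 := mul_eq_one_comm.mp hL
      simpa [mul_apply, sq] using congrFun (congrFun hLLt a) a
    · simpa [mulVec_single_one, Pi.single_apply, hai] using congrFun hfix a

noncomputable def rotationByThirds : Matrix (Fin 3) (Fin 3) ℚ_[2] :=
  !![1 / 3, 2 / 3, 2 / 3; 2 / 3, 1 / 3, -2 / 3; -2 / 3, 2 / 3, -1 / 3]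

theorem rotationByThirds_transpose_mul_self : rotationByThirdsᵀ * rotationByThirds = 1 := by
  ext a b
  fin_cases a <;> fin_cases b <;> simp [rotationByThirds, mul_apply, Fin.sum_univ_three] <;> ring

theorem det_rotationByThirds : rotationByThirds.det = 1 := by
  simp [rotationByThirds, det_fin_three]
  ring

theorem not_isNearMonomial_rotationByThirds : ¬ IsNearMonomial (1 / 4) rotationByThirds := by
  intro h
  have hnorm : ‖rotationByThirds 0 1‖ = 1 / 2 := by
    have h3 : ‖(3 : ℚ_[2])‖ = 1 := by
      simpa using (Padic.norm_natCast_eq_one_iff (p := 2) (n := 3)).mpr (by norm_num)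
    simp [rotationByThirds, norm_div, Padic.norm_two_eq, h3]
  rcases (h 0).norm_eq_one_or_le 1 with h1 | h1 <;> norm_num [hnorm] at h1

/-- There is an `M ∈ SO(3)_2` admitting none of the twelve Cardano
or Euler decompositions: for all axis orderings `(i, j, k)` with `i ≠ j` and
`j ≠ k`, `M` is not a product `X·Y·Z` of elements of `SO(3)_2` fixing
`e_i`, `e_j`, `e_k` respectively. -/
theorem no_cardano_euler_two_adic
    (SO3 : Set (Matrix (Fin 3) (Fin 3) ℚ_[2]))
    (hSO3 : SO3 = {L | Lᵀ * L = 1 ∧ L.det = 1})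
    (e : Fin 3 → (Fin 3 → ℚ_[2])) (he : ∀ i, e i = Pi.single i 1) :
    ∃ M ∈ SO3, ∀ i j k : Fin 3, i ≠ j → j ≠ k →
      ¬ ∃ X Y Z, X ∈ SO3 ∧ Y ∈ SO3 ∧ Z ∈ SO3 ∧
        X.mulVec (e i) = e i ∧ Y.mulVec (e j) = e j ∧ Z.mulVec (e k) = e k ∧
        M = X * Y * Z := by
  subst hSO3
  obtain rfl : e = fun i => Pi.single i 1 := funext he
  refine ⟨rotationByThirds, ⟨rotationByThirds_transpose_mul_self, det_rotationByThirds⟩, ?_⟩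
  rintro i j k - - ⟨X, Y, Z, hX, hY, hZ, hXi, hYj, hZk, hM⟩
  have nX := isNearMonomial_of_transpose_mul_self_of_mulVec_single hX.1 hXi
  have nY := isNearMonomial_of_transpose_mul_self_of_mulVec_single hY.1 hYj
  have nZ := isNearMonomial_of_transpose_mul_self_of_mulVec_single hZ.1 hZk
  apply not_isNearMonomial_rotationByThirds
  rw [hM]
  exact (nX.mul nY (by norm_num) (by norm_num)).mul nZ (by norm_num) (by norm_num)
end

section
/- Let p be an odd prime, v ∈ ℚ_p a p-adic unit that is not a square in ℚ_p, A = diag(1, -v, p), and SO(3)_p = {L ∈ M₃(ℚ_p) : LᵀAL = A, det L = 1}. Let e₁, e₂, e₃ be the standard basis vectors of ℚ_p³. Then for every M ∈ SO(3)_p, the set of triples (X, Y, Z) with X, Y, Z ∈ SO(3)_p, X e₁ = e₁, Y e₂ = e₂, Z e₃ = e₃ and M = X·Y·Z has exactly two elements. -/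
/-!
If `M = X Y Z`, then `Z e₃ = e₃` gives `M e₃ = X Y e₃`. A rotation `Y` about `e₂` is determined by
`(a, b)` with `a² + p b² = 1`, a rotation `X` about `e₁` by `(c, s)` with `c² - v p s² = 1`, and
`X Y e₃ = (-p b, p s a, c a)`. So `b = -M₀₂ / p`, `a² = 1 - M₀₂² / p`, and once `a ≠ 0` is chosen
`c`, `s` and `Z = (X Y)⁻¹ M` are forced; conversely every root `a` gives a decomposition.

It remains to see that `1 - M₀₂² / p` has exactly two square roots. Since `v` is a non-square unit,
`x² - v y²` has norm `max ‖x‖ ‖y‖ ²`, an even power of `p`; comparing with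
`M₀₂² - v M₁₂² = p (1 - M₂₂²)` shows `‖M₀₂‖ < 1`. Then `1 - M₀₂² / p ≡ 1 mod p`, which is a nonzero
square by Hensel's lemma.
-/

namespace Padic

variable {p : ℕ} [Fact p.Prime]

lemma _root_.PadicInt.norm_two_eq_one (hp : p ≠ 2) : ‖(2 : ℤ_[p])‖ = 1 := by
  simpa using PadicInt.norm_natCast_eq_one_iff.mpr
    ((Nat.coprime_primes Fact.out Nat.prime_two).mpr hp)

lemma isSquare_one_sub (hp : p ≠ 2) {w : ℚ_[p]} (hw : ‖w‖ < 1) : IsSquare (1 - w) := by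
  have hu : ‖1 - w‖ ≤ 1 := by
    rw [sub_eq_add_neg]
    exact (Padic.nonarchimedean _ _).trans (by simp [hw.le])
  set U : ℤ_[p] := ⟨1 - w, hu⟩
  have h1U : ‖(1 : ℤ_[p]) - U‖ = ‖w‖ := by
    rw [PadicInt.norm_def, PadicInt.coe_sub, PadicInt.coe_one]
    simp [U]
  obtain ⟨z, hz, -⟩ := hensels_lemma (p := p) (F := Polynomial.X ^ 2 - Polynomial.C U) (a := 1)
    (by simpa [h1U, one_add_one_eq_two, PadicInt.norm_two_eq_one hp] using hw)
  refine ⟨z, ?_⟩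
  have hzU : z ^ 2 = U := by simpa [sub_eq_zero] using hz
  simpa [sq, U] using congrArg ((↑) : ℤ_[p] → ℚ_[p]) hzU.symm

lemma norm_sq_sub_eq_one (hp : p ≠ 2) {v : ℚ_[p]} (hv : ‖v‖ = 1) (hvsq : ¬IsSquare v)
    {t : ℚ_[p]} (ht : ‖t‖ ≤ 1) : ‖t ^ 2 - v‖ = 1 := by
  have hmax : max ‖t ^ 2‖ ‖-v‖ = 1 := by
    rw [norm_neg, hv, norm_pow]
    exact max_eq_right (pow_le_one₀ (norm_nonneg t) ht)
  refine le_antisymm (hmax ▸ sub_eq_add_neg (t ^ 2) v ▸ Padic.nonarchimedean _ _) ?_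
  by_contra! hlt
  have ht2 : ‖t ^ 2‖ = 1 := by
    rw [← hv, ← norm_neg v]
    exact IsUltrametricDist.norm_eq_of_add_norm_lt_max (by rwa [hmax, ← sub_eq_add_neg])
  have ht0 : t ^ 2 ≠ 0 := norm_ne_zero_iff.mp (by simp [ht2])
  have hclose : ‖(t ^ 2 - v) / t ^ 2‖ < 1 := by rwa [norm_div, ht2, div_one]
  refine hvsq ?_
  have hvt : v = (1 - (t ^ 2 - v) / t ^ 2) * t ^ 2 := by
    rw [sub_div, div_self ht0, sub_sub_cancel, div_mul_cancel₀ _ ht0]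
  rw [hvt]
  exact (isSquare_one_sub hp hclose).mul (IsSquare.sq t)

lemma norm_sq_sub_mul_sq (hp : p ≠ 2) {v : ℚ_[p]} (hv : ‖v‖ = 1) (hvsq : ¬IsSquare v)
    (x y : ℚ_[p]) : ‖x ^ 2 - v * y ^ 2‖ = max ‖x‖ ‖y‖ ^ 2 := by
  rcases le_or_gt ‖x‖ ‖y‖ with hxy | hyx
  · rcases eq_or_ne y 0 with rfl | hy
    · simp [norm_le_zero_iff.mp (by simpa using hxy)]
    have hxy' : ‖x / y‖ ≤ 1 := by rwa [norm_div, div_le_one (norm_pos_iff.mpr hy)]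
    rw [show x ^ 2 - v * y ^ 2 = ((x / y) ^ 2 - v) * y ^ 2 by field_simp, norm_mul,
      norm_sq_sub_eq_one hp hv hvsq hxy', norm_pow, one_mul, max_eq_right hxy]
  · have hlt : ‖-(v * y ^ 2)‖ < ‖x ^ 2‖ := by
      simpa [norm_pow, hv] using pow_lt_pow_left₀ hyx (norm_nonneg y) two_ne_zero
    rw [sub_eq_add_neg, IsUltrametricDist.norm_add_eq_max_of_norm_ne_norm hlt.ne',
      max_eq_left hlt.le, max_eq_left hyx.le, norm_pow]

lemma norm_sq_ne_inv_p_mul_norm_sq {x : ℚ_[p]} (hx : x ≠ 0) (z : ℚ_[p]) :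
    ‖x‖ ^ 2 ≠ (p : ℝ)⁻¹ * ‖z‖ ^ 2 := by
  rcases eq_or_ne z 0 with rfl | hz
  · simpa using hx
  have hp1 : (1 : ℝ) < p := by exact_mod_cast (Fact.out : p.Prime).one_lt
  rw [norm_eq_zpow_neg_valuation hx, norm_eq_zpow_neg_valuation hz, ← zpow_neg_one,
    ← zpow_natCast, ← zpow_natCast, ← zpow_mul, ← zpow_mul, ← zpow_add₀ (by positivity)]
  intro h
  have := zpow_right_injective₀ (by positivity) hp1.ne' h
  omega

lemma norm_lt_one_of_sq_sub_mul_sq_add_p_mul_sq_eq_p (hp : p ≠ 2) {v : ℚ_[p]} (hv : ‖v‖ = 1)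
    (hvsq : ¬IsSquare v) {x y z : ℚ_[p]} (h : x ^ 2 - v * y ^ 2 + p * z ^ 2 = p) : ‖x‖ < 1 := by
  by_contra! hx
  have hp1 : (1 : ℝ) < p := by exact_mod_cast (Fact.out : p.Prime).one_lt
  have hN : max ‖x‖ ‖y‖ ^ 2 = (p : ℝ)⁻¹ * ‖1 - z ^ 2‖ := by
    rw [← norm_sq_sub_mul_sq hp hv hvsq, ← norm_p, ← norm_mul]
    congr 1
    linear_combination h
  have hN1 : 1 ≤ max ‖x‖ ‖y‖ ^ 2 := one_le_pow₀ (hx.trans (le_max_left _ _))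
  rcases le_or_gt ‖z‖ 1 with hz | hz
  · have : ‖1 - z ^ 2‖ ≤ 1 := by
      rw [sub_eq_add_neg]
      refine (Padic.nonarchimedean _ _).trans (max_le (by simp) ?_)
      rw [norm_neg, norm_pow]
      exact pow_le_one₀ (norm_nonneg z) hz
    have : (p : ℝ)⁻¹ < 1 := inv_lt_one_of_one_lt₀ hp1
    nlinarith [inv_pos.mpr (zero_lt_one.trans hp1)]
  · -- the two sides have valuations of different parity
    have hz2 : ‖(-1 : ℚ_[p])‖ < ‖z ^ 2‖ := by
      rw [norm_neg, norm_one, norm_pow]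
      exact one_lt_pow₀ hz two_ne_zero
    have h1z : ‖1 - z ^ 2‖ = ‖z‖ ^ 2 := by
      rw [← norm_neg, neg_sub, sub_eq_add_neg, IsUltrametricDist.norm_add_eq_max_of_norm_ne_norm
        hz2.ne', max_eq_left hz2.le, norm_pow]
    obtain ⟨w, hw⟩ : ∃ w, ‖w‖ = max ‖x‖ ‖y‖ := by
      rcases max_choice ‖x‖ ‖y‖ with h | h
      exacts [⟨x, h.symm⟩, ⟨y, h.symm⟩]
    have hw0 : w ≠ 0 := norm_pos_iff.mp (by rw [hw]; linarith [le_max_left ‖x‖ ‖y‖])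
    exact norm_sq_ne_inv_p_mul_norm_sq hw0 z (by rw [hw, hN, h1z])

lemma norm_sq_div_p_lt_one {x : ℚ_[p]} (hx : ‖x‖ < 1) : ‖x ^ 2 / p‖ < 1 := by
  have hp1 : (1 : ℝ) < p := by exact_mod_cast (Fact.out : p.Prime).one_lt
  have hx' : ‖x‖ ≤ (p : ℝ)⁻¹ := by
    simpa using (norm_le_pow_iff_norm_lt_pow_add_one x (-1)).mpr (by simpa using hx)
  rw [norm_div, norm_pow, norm_p, div_inv_eq_mul]
  calc ‖x‖ ^ 2 * p ≤ (p : ℝ)⁻¹ ^ 2 * p := by gcongr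
    _ = (p : ℝ)⁻¹ := by field_simp
    _ < 1 := inv_lt_one_of_one_lt₀ hp1

lemma exists_sq_eq_one_sub_sq_div_p (hp : p ≠ 2) {v : ℚ_[p]} (hv : ‖v‖ = 1)
    (hvsq : ¬IsSquare v) {x y z : ℚ_[p]} (h : x ^ 2 - v * y ^ 2 + p * z ^ 2 = p) :
    ∃ r, r ≠ 0 ∧ 1 - x ^ 2 / p = r ^ 2 := by
  have hw := norm_sq_div_p_lt_one (norm_lt_one_of_sq_sub_mul_sq_add_p_mul_sq_eq_p hp hv hvsq h)
  obtain ⟨r, hr⟩ := isSquare_one_sub hp hw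
  refine ⟨r, ?_, by rw [hr, sq]⟩
  rintro rfl
  rw [mul_zero, sub_eq_zero] at hr
  simp [← hr] at hw

end Padic

namespace Matrix

section SpecialIsometries

variable {n R : Type*} [Fintype n] [DecidableEq n] [CommRing R]

def specialIsometries (D : Matrix n n R) : Set (Matrix n n R) :=
  {L | Lᵀ * D * L = D ∧ L.det = 1}

variable {D L N : Matrix n n R}

lemma mul_mem_specialIsometries (hL : L ∈ specialIsometries D) (hN : N ∈ specialIsometries D) :
    L * N ∈ specialIsometries D := by
  refine ⟨?_, by rw [det_mul, hL.2, hN.2, mul_one]⟩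
  calc (L * N)ᵀ * D * (L * N) = Nᵀ * (Lᵀ * D * L) * N := by
        simp only [transpose_mul, Matrix.mul_assoc]
    _ = D := by rw [hL.1, hN.1]

lemma inv_mem_specialIsometries (hL : L ∈ specialIsometries D) : L⁻¹ ∈ specialIsometries D := by
  have hu : IsUnit L.det := hL.2 ▸ isUnit_one
  refine ⟨?_, by simp [hL.2]⟩
  calc L⁻¹ᵀ * D * L⁻¹ = L⁻¹ᵀ * (Lᵀ * D * L) * L⁻¹ := by rw [hL.1]
    _ = (L * L⁻¹)ᵀ * D * (L * L⁻¹) := by simp only [transpose_mul, Matrix.mul_assoc]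
    _ = D := by simp [mul_nonsing_inv L hu]

def cardanoDecompositions (D M : Matrix (Fin 3) (Fin 3) R) :
    Set (Matrix (Fin 3) (Fin 3) R × Matrix (Fin 3) (Fin 3) R × Matrix (Fin 3) (Fin 3) R) :=
  {t | t.1 ∈ specialIsometries D ∧ t.2.1 ∈ specialIsometries D ∧ t.2.2 ∈ specialIsometries D ∧
    t.1 *ᵥ Pi.single 0 1 = Pi.single 0 1 ∧ t.2.1 *ᵥ Pi.single 1 1 = Pi.single 1 1 ∧
    t.2.2 *ᵥ Pi.single 2 1 = Pi.single 2 1 ∧ M = t.1 * t.2.1 * t.2.2}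

lemma mem_cardanoDecompositions_iff {D M X Y Z : Matrix (Fin 3) (Fin 3) R}
    (hM : M ∈ specialIsometries D) :
    (X, Y, Z) ∈ cardanoDecompositions D M ↔
      (X ∈ specialIsometries D ∧ X *ᵥ Pi.single 0 1 = Pi.single 0 1) ∧
      (Y ∈ specialIsometries D ∧ Y *ᵥ Pi.single 1 1 = Pi.single 1 1) ∧
      (X * Y) *ᵥ Pi.single 2 1 = M *ᵥ Pi.single 2 1 ∧ Z = (X * Y)⁻¹ * M := by
  simp only [cardanoDecompositions, Set.mem_ofPred_eq]
  constructor
  · rintro ⟨hX, hY, -, hXe, hYe, hZe, rfl⟩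
    have hu : IsUnit (X * Y).det := (mul_mem_specialIsometries hX hY).2 ▸ isUnit_one
    exact ⟨⟨hX, hXe⟩, ⟨hY, hYe⟩, by rw [← mulVec_mulVec _ (X * Y) Z, hZe],
      (nonsing_inv_mul_cancel_left _ _ hu).symm⟩
  · rintro ⟨⟨hX, hXe⟩, ⟨hY, hYe⟩, hcol, rfl⟩
    have hXY := mul_mem_specialIsometries hX hY
    have hu : IsUnit (X * Y).det := hXY.2 ▸ isUnit_one
    refine ⟨hX, hY, mul_mem_specialIsometries (inv_mem_specialIsometries hXY) hM, hXe, hYe, ?_, ?_⟩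
    · rw [← mulVec_mulVec, ← hcol, mulVec_mulVec, nonsing_inv_mul _ hu, one_mulVec]
    · exact (mul_nonsing_inv_cancel_left _ _ hu).symm

end SpecialIsometries

section Rotations

variable {K : Type*} [Field K] {v π : K}

def rotX (v π c s : K) : Matrix (Fin 3) (Fin 3) K := !![1, 0, 0; 0, c, π * s; 0, v * s, c]

def rotY (π a b : K) : Matrix (Fin 3) (Fin 3) K := !![a, 0, -π * b; 0, 1, 0; b, 0, a]

lemma specialIsometries_diagonal_entry {L : Matrix (Fin 3) (Fin 3) K}
    (hL : L ∈ specialIsometries (diagonal ![1, -v, π])) (i j : Fin 3) :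
    L 0 i * L 0 j - v * (L 1 i * L 1 j) + π * (L 2 i * L 2 j) = diagonal ![1, -v, π] i j := by
  rw [← hL.1, Matrix.mul_assoc, mul_apply]
  simp only [diagonal_mul, transpose_apply, Fin.sum_univ_three, cons_val]
  ring

lemma specialIsometries_diagonal_col_two {L : Matrix (Fin 3) (Fin 3) K}
    (hL : L ∈ specialIsometries (diagonal ![1, -v, π])) :
    L 0 2 ^ 2 - v * L 1 2 ^ 2 + π * L 2 2 ^ 2 = π := by
  have h := specialIsometries_diagonal_entry hL 2 2
  simp only [diagonal_apply_eq, cons_val] at h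
  linear_combination h

lemma rotX_mem {c s : K} (h : c ^ 2 - v * π * s ^ 2 = 1) :
    rotX v π c s ∈ specialIsometries (diagonal ![1, -v, π]) := by
  refine ⟨?_, ?_⟩
  · calc (rotX v π c s)ᵀ * diagonal ![1, -v, π] * rotX v π c s
          = diagonal ![1, -v * (c ^ 2 - v * π * s ^ 2), π * (c ^ 2 - v * π * s ^ 2)] := by
            ext i j
            fin_cases i <;> fin_cases j <;>
              simp [rotX, mul_apply, Fin.sum_univ_three] <;> ring
      _ = diagonal ![1, -v, π] := by rw [h, mul_one, mul_one]
  · rw [det_fin_three]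
    simp only [rotX, of_apply, cons_val]
    linear_combination h

lemma rotY_mem {a b : K} (h : a ^ 2 + π * b ^ 2 = 1) :
    rotY π a b ∈ specialIsometries (diagonal ![1, -v, π]) := by
  refine ⟨?_, ?_⟩
  · calc (rotY π a b)ᵀ * diagonal ![1, -v, π] * rotY π a b
          = diagonal ![a ^ 2 + π * b ^ 2, -v, π * (a ^ 2 + π * b ^ 2)] := by
            ext i j
            fin_cases i <;> fin_cases j <;>
              simp [rotY, mul_apply, Fin.sum_univ_three] <;> ring
      _ = diagonal ![1, -v, π] := by rw [h, mul_one]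
  · rw [det_fin_three]
    simp only [rotY, of_apply, cons_val]
    linear_combination h

lemma rotX_mulVec_single_zero (c s : K) : rotX v π c s *ᵥ Pi.single 0 1 = Pi.single 0 1 := by
  ext i; fin_cases i <;> simp [rotX]

lemma rotY_mulVec_single_one (a b : K) : rotY π a b *ᵥ Pi.single 1 1 = Pi.single 1 1 := by
  ext i; fin_cases i <;> simp [rotY]

lemma exists_eq_rotX (hv : v ≠ 0) {L : Matrix (Fin 3) (Fin 3) K}
    (hL : L ∈ specialIsometries (diagonal ![1, -v, π]))
    (hfix : L *ᵥ Pi.single 0 1 = Pi.single 0 1) : ∃ c s, L = rotX v π c s := by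
  have h00 : L 0 0 = 1 := by simpa using congrFun hfix 0
  have h10 : L 1 0 = 0 := by simpa using congrFun hfix 1
  have h20 : L 2 0 = 0 := by simpa using congrFun hfix 2
  have h01 : L 0 1 = 0 := by simpa [h00, h10, h20] using specialIsometries_diagonal_entry hL 0 1
  have h02 : L 0 2 = 0 := by simpa [h00, h10, h20] using specialIsometries_diagonal_entry hL 0 2
  have e11 := specialIsometries_diagonal_entry hL 1 1
  have e12 := specialIsometries_diagonal_entry hL 1 2
  simp only [h01, diagonal_apply_eq, diagonal_apply_ne, ne_eq, Fin.reduceEq, not_false_eq_true,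
    cons_val] at e11 e12
  have hdet := hL.2
  rw [det_fin_three, h00, h10, h20] at hdet
  obtain ⟨s, hs⟩ : ∃ s, L 2 1 = v * s := ⟨L 2 1 / v, by field_simp⟩
  have h22 : L 2 2 = L 1 1 := mul_left_cancel₀ hv <| by
    linear_combination -(L 2 1 * e12) + v * L 1 1 * hdet + L 2 2 * e11
  have h12 : L 1 2 = π * s := mul_left_cancel₀ hv <| by
    linear_combination -(L 1 1 * e12) + π * L 2 1 * hdet + L 1 2 * e11 + π * hs
  refine ⟨L 1 1, s, ?_⟩
  ext i j
  fin_cases i <;> fin_cases j <;> simp [rotX, h00, h10, h20, h01, h02, h12, h22, hs]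

lemma exists_eq_rotY (hv : v ≠ 0) {L : Matrix (Fin 3) (Fin 3) K}
    (hL : L ∈ specialIsometries (diagonal ![1, -v, π]))
    (hfix : L *ᵥ Pi.single 1 1 = Pi.single 1 1) :
    ∃ a b, a ^ 2 + π * b ^ 2 = 1 ∧ L = rotY π a b := by
  have h01 : L 0 1 = 0 := by simpa using congrFun hfix 0
  have h11 : L 1 1 = 1 := by simpa using congrFun hfix 1
  have h21 : L 2 1 = 0 := by simpa using congrFun hfix 2
  have h10 : L 1 0 = 0 := by
    simpa [h01, h11, h21, hv] using specialIsometries_diagonal_entry hL 0 1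
  have h12 : L 1 2 = 0 := by
    simpa [h01, h11, h21, hv] using specialIsometries_diagonal_entry hL 1 2
  have e00 := specialIsometries_diagonal_entry hL 0 0
  have e02 := specialIsometries_diagonal_entry hL 0 2
  simp only [h10, diagonal_apply_eq, diagonal_apply_ne, ne_eq, Fin.reduceEq, not_false_eq_true,
    cons_val] at e00 e02
  have hdet := hL.2
  rw [det_fin_three, h01, h11, h21, h10, h12] at hdet
  have h02 : L 0 2 = -π * L 2 0 := by
    linear_combination L 0 0 * e02 - π * L 2 0 * hdet - L 0 2 * e00
  have h22 : L 2 2 = L 0 0 := by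
    linear_combination L 2 0 * e02 + L 0 0 * hdet - L 2 2 * e00
  refine ⟨L 0 0, L 2 0, by linear_combination e00, ?_⟩
  ext i j
  fin_cases i <;> fin_cases j <;> simp [rotY, h01, h11, h21, h10, h12, h02, h22]

lemma rotX_mul_rotY_mulVec_single_two_eq_iff {M : Matrix (Fin 3) (Fin 3) K} {c s a b : K} :
    (rotX v π c s * rotY π a b) *ᵥ Pi.single 2 1 = M *ᵥ Pi.single 2 1 ↔
      -π * b = M 0 2 ∧ π * s * a = M 1 2 ∧ c * a = M 2 2 := by
  simp [funext_iff, Fin.forall_fin_succ, rotX, rotY]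

noncomputable def cardanoTriple (v π : K) (M : Matrix (Fin 3) (Fin 3) K) (a : K) :
    Matrix (Fin 3) (Fin 3) K × Matrix (Fin 3) (Fin 3) K × Matrix (Fin 3) (Fin 3) K :=
  (rotX v π (M 2 2 / a) (M 1 2 / (π * a)), rotY π a (-M 0 2 / π),
    (rotX v π (M 2 2 / a) (M 1 2 / (π * a)) * rotY π a (-M 0 2 / π))⁻¹ * M)

lemma cardanoTriple_injective (v π : K) (M : Matrix (Fin 3) (Fin 3) K) :
    Function.Injective (cardanoTriple v π M) := fun a b h => by
  simpa [cardanoTriple, rotY] using congrArg (fun t => t.2.1 0 0) h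

theorem cardanoDecompositions_eq_image (hv : v ≠ 0) (hπ : π ≠ 0) {M : Matrix (Fin 3) (Fin 3) K}
    (hM : M ∈ specialIsometries (diagonal ![1, -v, π])) (hw : 1 - M 0 2 ^ 2 / π ≠ 0) :
    cardanoDecompositions (diagonal ![1, -v, π]) M =
      cardanoTriple v π M '' {a | a ^ 2 = 1 - M 0 2 ^ 2 / π} := by
  have hcol := specialIsometries_diagonal_col_two hM
  ext ⟨X, Y, Z⟩
  simp only [mem_cardanoDecompositions_iff hM, Set.mem_image, Set.mem_ofPred_eq, cardanoTriple,
    Prod.mk.injEq]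
  constructor
  · rintro ⟨hX, hY, hXY, rfl⟩
    obtain ⟨c, s, rfl⟩ := exists_eq_rotX hv hX.1 hX.2
    obtain ⟨a, b, hab, rfl⟩ := exists_eq_rotY hv hY.1 hY.2
    obtain ⟨h0, h1, h2⟩ := rotX_mul_rotY_mulVec_single_two_eq_iff.mp hXY
    have ha : a ^ 2 = 1 - M 0 2 ^ 2 / π := by
      rw [← h0]; field_simp; linear_combination hab
    have ha0 : a ≠ 0 := by rintro rfl; exact hw (by rw [← ha]; ring)
    have hX : rotX v π (M 2 2 / a) (M 1 2 / (π * a)) = rotX v π c s := by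
      rw [← h1, ← h2]; congr 1 <;> field_simp
    have hY : rotY π a (-M 0 2 / π) = rotY π a b := by
      rw [← h0]; congr 1; field_simp
    exact ⟨a, ha, hX, hY, by rw [hX, hY]⟩
  · rintro ⟨a, ha, rfl, rfl, rfl⟩
    have ha0 : a ≠ 0 := by rintro rfl; exact hw (by rw [← ha]; ring)
    refine ⟨⟨rotX_mem ?_, rotX_mulVec_single_zero _ _⟩, ⟨rotY_mem ?_, rotY_mulVec_single_one _ _⟩,
      rotX_mul_rotY_mulVec_single_two_eq_iff.mpr ⟨?_, ?_, ?_⟩, rfl⟩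
    · have hπa : π * a ^ 2 = π - M 0 2 ^ 2 := by rw [ha]; field_simp
      field_simp
      linear_combination hcol - hπa
    · rw [ha]; field_simp; ring
    all_goals field_simp

end Rotations

end Matrix

open Matrix

/-- For odd `p`, every `M ∈ SO(3)_p` has exactly two Cardano
decompositions `M = X·Y·Z` with `X, Y, Z ∈ SO(3)_p` fixing `e₁`, `e₂`, `e₃`
respectively. -/
theorem cardano_decomposition_exactly_two
    (p : ℕ) [Fact p.Prime] (hp : p ≠ 2)
    (v : ℚ_[p]) (hv : ‖v‖ = 1) (hvsq : ¬ IsSquare v)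
    (A : Matrix (Fin 3) (Fin 3) ℚ_[p])
    (hA : A = Matrix.diagonal ![1, -v, (p : ℚ_[p])])
    (SO3 : Set (Matrix (Fin 3) (Fin 3) ℚ_[p]))
    (hSO3 : SO3 = {L | Lᵀ * A * L = A ∧ L.det = 1})
    (e : Fin 3 → (Fin 3 → ℚ_[p])) (he : ∀ i, e i = Pi.single i 1)
    (M : Matrix (Fin 3) (Fin 3) ℚ_[p]) (hM : M ∈ SO3) :
    {t : Matrix (Fin 3) (Fin 3) ℚ_[p] × Matrix (Fin 3) (Fin 3) ℚ_[p] ×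
        Matrix (Fin 3) (Fin 3) ℚ_[p] |
      t.1 ∈ SO3 ∧ t.2.1 ∈ SO3 ∧ t.2.2 ∈ SO3 ∧
      t.1.mulVec (e 0) = e 0 ∧ t.2.1.mulVec (e 1) = e 1 ∧
      t.2.2.mulVec (e 2) = e 2 ∧ M = t.1 * t.2.1 * t.2.2}.encard = 2 := by
  subst hA hSO3
  simp only [he]
  have hv0 : v ≠ 0 := norm_ne_zero_iff.mp (hv ▸ one_ne_zero)
  have hp0 : (p : ℚ_[p]) ≠ 0 := Nat.cast_ne_zero.mpr (Fact.out : p.Prime).ne_zero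
  obtain ⟨r, hr0, hr⟩ := Padic.exists_sq_eq_one_sub_sq_div_p hp hv hvsq
    (specialIsometries_diagonal_col_two hM)
  have hroots : {a | a ^ 2 = 1 - M 0 2 ^ 2 / p} = {r, -r} := by
    ext a
    simp [hr, sq_eq_sq_iff_eq_or_eq_neg]
  change (cardanoDecompositions (diagonal ![1, -v, (p : ℚ_[p])]) M).encard = 2
  rw [cardanoDecompositions_eq_image hv0 hp0 hM (hr ▸ pow_ne_zero 2 hr0),
    (cardanoTriple_injective _ _ M).injOn.encard_image, hroots,
    Set.encard_pair (self_ne_neg.mpr hr0)]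
end
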